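/- For a C² contact transformation f = (f₁, f₂, f₃) of the Heisenberg group with f*ω = λω, the determinant of the Jacobian of f equals λ², where λ = Xf₁·Yf₂ - Yf₁·Xf₂. -/

import Mathlib

noncomputable section

/-- The contact form ω = dt + 2x dy - 2y dx at p, applied to v. -/
def omegaH (p v : ℝ × ℝ × ℝ) : ℝ := v.2.2 + 2 * p.1 * v.2.1 - 2 * p.2.1 * v.1

/-- The horizontal vector field X = ∂_x + 2y ∂_t applied to a scalar function. -/
def Xop (g : ℝ × ℝ × ℝ → ℝ) (p : ℝ × ℝ × ℝ) : ℝ := fderiv ℝ g p (1, 0, 2 * p.2.1)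

/-- The horizontal vector field Y = ∂_y - 2x ∂_t applied to a scalar function. -/
def Yop (g : ℝ × ℝ × ℝ → ℝ) (p : ℝ × ℝ × ℝ) : ℝ := fderiv ℝ g p (0, 1, -2 * p.1)

lemma dir_eq (f : ℝ×ℝ×ℝ → ℝ×ℝ×ℝ)
    (D : (ℝ×ℝ×ℝ) → (ℝ×ℝ×ℝ) →L[ℝ] (ℝ×ℝ×ℝ))
    (D' : (ℝ×ℝ×ℝ) →L[ℝ] (ℝ×ℝ×ℝ) →L[ℝ] (ℝ×ℝ×ℝ))
    (p u w : ℝ×ℝ×ℝ)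
    (hDw : ∀ w, HasFDerivAt (fun q => D q w) (D'.flip w) p)
    (hfp : HasFDerivAt f (D p) p)
    (heq : (fun q => (D q w).2.2 + 2*(f q).1*(D q w).2.1 - 2*(f q).2.1*(D q w).1)
      =ᶠ[nhds p] (fun q =>
        ((D q (0,0,1)).2.2 + 2*(f q).1*(D q (0,0,1)).2.1 - 2*(f q).2.1*(D q (0,0,1)).1)
           * (w.2.2 + 2*q.1*w.2.1 - 2*q.2.1*w.1))) :
    (D' u w).2.2 + 2*(f p).1*(D' u w).2.1 - 2*(f p).2.1*(D' u w).1
      + 2*(D p u).1*(D p w).2.1 - 2*(D p u).2.1*(D p w).1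
    =
    ((D' u (0,0,1)).2.2 + 2*(f p).1*(D' u (0,0,1)).2.1 - 2*(f p).2.1*(D' u (0,0,1)).1
      + 2*(D p u).1*(D p (0,0,1)).2.1 - 2*(D p u).2.1*(D p (0,0,1)).1)
      * (w.2.2 + 2*p.1*w.2.1 - 2*p.2.1*w.1)
    + ((D p (0,0,1)).2.2 + 2*(f p).1*(D p (0,0,1)).2.1 - 2*(f p).2.1*(D p (0,0,1)).1)
      * (2*u.1*w.2.1 - 2*u.2.1*w.1) := by
  have mkL : ∀ v : ℝ×ℝ×ℝ, HasFDerivAt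
      (fun q => (D q v).2.2 + 2*(f q).1*(D q v).2.1 - 2*(f q).2.1*(D q v).1)
      (((ContinuousLinearMap.snd ℝ ℝ ℝ).comp ((ContinuousLinearMap.snd ℝ ℝ (ℝ×ℝ)).comp (D'.flip v))
        + ((2*(f p).1) • ((ContinuousLinearMap.fst ℝ ℝ ℝ).comp ((ContinuousLinearMap.snd ℝ ℝ (ℝ×ℝ)).comp (D'.flip v)))
          + (D p v).2.1 • ((2:ℝ) • ((ContinuousLinearMap.fst ℝ ℝ (ℝ×ℝ)).comp (D p)))))
       - ((2*(f p).2.1) • ((ContinuousLinearMap.fst ℝ ℝ (ℝ×ℝ)).comp (D'.flip v))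
          + (D p v).1 • ((2:ℝ) • ((ContinuousLinearMap.fst ℝ ℝ ℝ).comp ((ContinuousLinearMap.snd ℝ ℝ (ℝ×ℝ)).comp (D p)))))) p := by
    intro v
    exact (((hDw v).snd.snd).add ((hfp.fst.const_mul (2:ℝ)).mul ((hDw v).snd.fst))).sub
      ((hfp.snd.fst.const_mul (2:ℝ)).mul ((hDw v).fst))
  have homg : HasFDerivAt (fun q : ℝ×ℝ×ℝ => w.2.2 + 2*q.1*w.2.1 - 2*q.2.1*w.1)
      ((0 + w.2.1 • ((2:ℝ) • (ContinuousLinearMap.fst ℝ ℝ (ℝ×ℝ))))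
        - w.1 • ((2:ℝ) • ((ContinuousLinearMap.fst ℝ ℝ ℝ).comp (ContinuousLinearMap.snd ℝ ℝ (ℝ×ℝ))))) p := by
    exact ((hasFDerivAt_const w.2.2 p).add
      (((hasFDerivAt_fst (p := p) (𝕜 := ℝ) (E := ℝ) (F := ℝ×ℝ)).const_mul (2:ℝ)).mul_const w.2.1)).sub
      (((hasFDerivAt_snd (p := p) (𝕜 := ℝ) (E := ℝ) (F := ℝ×ℝ)).fst.const_mul (2:ℝ)).mul_const w.1)
  have hB := (mkL (0,0,1)).mul homg
  have hB' := hB.congr_of_eventuallyEq heq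
  have hval := DFunLike.congr_fun ((mkL w).unique hB') u
  simp only [ContinuousLinearMap.add_apply, ContinuousLinearMap.sub_apply,
    ContinuousLinearMap.smul_apply, ContinuousLinearMap.comp_apply,
    ContinuousLinearMap.flip_apply, ContinuousLinearMap.coe_fst', ContinuousLinearMap.coe_snd',
    ContinuousLinearMap.zero_apply, ContinuousLinearMap.smulRight_apply,
    smul_eq_mul] at hval
  ring_nf at hval ⊢
  linarith [hval]

/-- For a C² contact transformation f with f*ω = λω, the Jacobian determinant
of f equals λ², where λ = Xf₁·Yf₂ - Yf₁·Xf₂. -/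
theorem jacobian_of_contact (Ω : Set (ℝ × ℝ × ℝ)) (hΩ : IsOpen Ω)
    (f : ℝ × ℝ × ℝ → ℝ × ℝ × ℝ) (hf : ContDiffOn ℝ 2 f Ω)
    (lam : ℝ × ℝ × ℝ → ℝ) (hlam : ∀ p ∈ Ω, lam p ≠ 0)
    (hcontact : ∀ p ∈ Ω, ∀ v : ℝ × ℝ × ℝ,
      omegaH (f p) (fderiv ℝ f p v) = lam p * omegaH p v)
    (p : ℝ × ℝ × ℝ) (hp : p ∈ Ω) :
    Matrix.det
      !![(fderiv ℝ f p (1, 0, 0)).1,   (fderiv ℝ f p (0, 1, 0)).1,   (fderiv ℝ f p (0, 0, 1)).1;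
         (fderiv ℝ f p (1, 0, 0)).2.1, (fderiv ℝ f p (0, 1, 0)).2.1, (fderiv ℝ f p (0, 0, 1)).2.1;
         (fderiv ℝ f p (1, 0, 0)).2.2, (fderiv ℝ f p (0, 1, 0)).2.2, (fderiv ℝ f p (0, 0, 1)).2.2]
      = lam p ^ 2 ∧
    lam p = Xop (fun q => (f q).1) p * Yop (fun q => (f q).2.1) p
      - Yop (fun q => (f q).1) p * Xop (fun q => (f q).2.1) p := by
  have hmem : Ω ∈ nhds p := hΩ.mem_nhds hp
  set D : (ℝ×ℝ×ℝ) → (ℝ×ℝ×ℝ) →L[ℝ] (ℝ×ℝ×ℝ) := fun q => fderiv ℝ f q with hDdef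
  have hdiffOn : DifferentiableOn ℝ f Ω := hf.differentiableOn (by norm_num)
  have hDevAt : ∀ q ∈ Ω, HasFDerivAt f (D q) q := fun q hq =>
    (hdiffOn.differentiableAt (hΩ.mem_nhds hq)).hasFDerivAt
  have hDev : ∀ᶠ q in nhds p, HasFDerivAt f (D q) q := by
    filter_upwards [hmem] with q hq using hDevAt q hq
  have hD1 : ContDiffOn ℝ 1 D Ω := hf.fderiv_of_isOpen hΩ (by norm_num)
  have hDdiff : DifferentiableAt ℝ D p :=
    (hD1.differentiableOn one_ne_zero).differentiableAt hmem
  set D' := fderiv ℝ D p with hD'def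
  have hD' : HasFDerivAt D D' p := hDdiff.hasFDerivAt
  have hsymm : ∀ u w, D' u w = D' w u := fun u w =>
    second_derivative_symmetric_of_eventually hDev hD' u w
  have hDw : ∀ w : ℝ×ℝ×ℝ, HasFDerivAt (fun q => D q w) (D'.flip w) p := by
    intro w
    have := hD'.clm_apply (hasFDerivAt_const w p)
    simpa using this
  have hfp : HasFDerivAt f (D p) p := hDevAt p hp
  -- the eventual equality from the contact condition
  have heq : ∀ w : ℝ×ℝ×ℝ,
      (fun q => (D q w).2.2 + 2*(f q).1*(D q w).2.1 - 2*(f q).2.1*(D q w).1)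
      =ᶠ[nhds p] (fun q =>
        ((D q (0,0,1)).2.2 + 2*(f q).1*(D q (0,0,1)).2.1 - 2*(f q).2.1*(D q (0,0,1)).1)
           * (w.2.2 + 2*q.1*w.2.1 - 2*q.2.1*w.1)) := by
    intro w
    filter_upwards [hmem] with q hq
    have h1 := hcontact q hq w
    have h2 := hcontact q hq (0,0,1)
    simp only [omegaH] at h1 h2
    norm_num at h2
    simp only [hDdef]
    rw [h1, h2]
  -- the two key directional equations
  have E1 := dir_eq f D D' p (1,0,2*p.2.1) (0,1,-2*p.1) hDw hfp (heq (0,1,-2*p.1))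
  have E2 := dir_eq f D D' p (0,1,-2*p.1) (1,0,2*p.2.1) hDw hfp (heq (1,0,2*p.2.1))
  have hs := hsymm (1,0,2*p.2.1) (0,1,-2*p.1)
  -- lam p = Φ_T p
  have hlamT := hcontact p hp (0,0,1)
  simp only [omegaH] at hlamT
  norm_num at hlamT
  -- the lambda formula in terms of D p applied to X and Y
  have hkey : lam p = (D p (1,0,2*p.2.1)).1 * (D p (0,1,-2*p.1)).2.1
      - (D p (0,1,-2*p.1)).1 * (D p (1,0,2*p.2.1)).2.1 := by
    norm_num at E1 E2 ⊢
    rw [hsymm (1,0,2*p.2.1) (0,1,-(2*p.1))] at E1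
    simp only [hDdef] at E1 E2
    linarith [E1, E2, hlamT]
  constructor
  · -- determinant part
    have hXsum : ((1:ℝ),(0:ℝ),2*p.2.1) = ((1:ℝ),(0:ℝ),(0:ℝ)) + (2*p.2.1) • ((0:ℝ),(0:ℝ),(1:ℝ)) := by
      simp [Prod.ext_iff]
    have hYsum : ((0:ℝ),(1:ℝ),-2*p.1) = ((0:ℝ),(1:ℝ),(0:ℝ)) + (-2*p.1) • ((0:ℝ),(0:ℝ),(1:ℝ)) := by
      simp [Prod.ext_iff]
    have eqc1 := hcontact p hp (1,0,0)
    have eqc2 := hcontact p hp (0,1,0)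
    have eqc3 := hcontact p hp (0,0,1)
    simp only [omegaH] at eqc1 eqc2 eqc3
    norm_num at eqc1 eqc2 eqc3
    rw [hXsum, hYsum] at hkey
    simp only [map_add, map_smul, Prod.fst_add, Prod.snd_add, Prod.smul_fst, Prod.smul_snd,
      smul_eq_mul] at hkey
    simp only [Matrix.det_fin_three, Matrix.cons_val', Matrix.cons_val_zero, Matrix.cons_val_one,
      Matrix.head_cons, Matrix.empty_val', Matrix.cons_val_fin_one, Matrix.head_fin_const,
      Matrix.cons_val_two, Matrix.tail_cons, Matrix.of_apply]
    simp only [hDdef] at eqc1 eqc2 eqc3 hkey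
    linear_combination
      ((fderiv ℝ f p (0,1,0)).1 * (fderiv ℝ f p (0,0,1)).2.1
        - (fderiv ℝ f p (0,0,1)).1 * (fderiv ℝ f p (0,1,0)).2.1) * eqc1
      - ((fderiv ℝ f p (1,0,0)).1 * (fderiv ℝ f p (0,0,1)).2.1
        - (fderiv ℝ f p (0,0,1)).1 * (fderiv ℝ f p (1,0,0)).2.1) * eqc2
      + ((fderiv ℝ f p (1,0,0)).1 * (fderiv ℝ f p (0,1,0)).2.1
        - (fderiv ℝ f p (0,1,0)).1 * (fderiv ℝ f p (1,0,0)).2.1) * eqc3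
      - lam p * hkey
  · -- lambda formula part
    have hx1 : Xop (fun q => (f q).1) p = (D p (1,0,2*p.2.1)).1 := by
      rw [Xop, hfp.fst.fderiv]; simp
    have hy1 : Yop (fun q => (f q).1) p = (D p (0,1,-2*p.1)).1 := by
      rw [Yop, hfp.fst.fderiv]; simp
    have hx2 : Xop (fun q => (f q).2.1) p = (D p (1,0,2*p.2.1)).2.1 := by
      rw [Xop, hfp.snd.fst.fderiv]; simp
    have hy2 : Yop (fun q => (f q).2.1) p = (D p (0,1,-2*p.1)).2.1 := by
      rw [Yop, hfp.snd.fst.fderiv]; simp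
    rw [hx1, hy1, hx2, hy2]
    exact hkey
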